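/- arXiv:1108.5332 — 4 statements merged into one kernel-verified Lean document; each statement's English description precedes it below -/
import Mathlib

section
/- Let c_1,…,c_d ∈ M_m(ℂ) satisfy the matrix upper L_∞-Khintchine inequality with constant C > 0. Let n ≥ 1, let x_1,…,x_d ∈ M_n(ℂ), let t ≥ 0, and let P, Q ∈ M_n(ℂ) be orthogonal projections (P = P^* = P², Q = Q^* = Q²) such that ‖(Σ_{i=1}^d x_i^* x_i)^{1/2} P‖ ≤ t and ‖(Σ_{i=1}^d x_i x_i^*)^{1/2} Q‖ ≤ t. Then ‖(I_m ⊗ Q)(Σ_{i=1}^d c_i ⊗ x_i)(I_m ⊗ P)‖ ≤ C t. -/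
open scoped Kronecker ComplexOrder
open Matrix

/-- The ℓ²-operator norm of a square complex matrix. -/
noncomputable def opNorm {ι : Type*} [Fintype ι] [DecidableEq ι] (A : Matrix ι ι ℂ) : ℝ :=
  ‖Matrix.toEuclideanCLM (𝕜 := ℂ) A‖

lemma posSemidef_sum_mul_conjTranspose {ι : Type*} [Fintype ι] {d : ℕ}
    (x : Fin d → Matrix ι ι ℂ) : (∑ i, x i * (x i)ᴴ).PosSemidef :=
  Finset.sum_induction _ _ (fun _ _ ha hb => ha.add hb) Matrix.PosSemidef.zero
    (fun i _ => Matrix.posSemidef_self_mul_conjTranspose (x i))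

lemma posSemidef_sum_conjTranspose_mul {ι : Type*} [Fintype ι] {d : ℕ}
    (x : Fin d → Matrix ι ι ℂ) : (∑ i, (x i)ᴴ * x i).PosSemidef :=
  Finset.sum_induction _ _ (fun _ _ ha hb => ha.add hb) Matrix.PosSemidef.zero
    (fun i _ => Matrix.posSemidef_conjTranspose_mul_self (x i))

namespace Matrix.PosSemidef

/-- The positive semidefinite square root of a positive semidefinite matrix (as in the older
Mathlib, where it was `Matrix.PosSemidef.sqrt`). -/
noncomputable def sqrt {n : Type*} [Fintype n] [DecidableEq n] {A : Matrix n n ℂ}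
    (hA : PosSemidef A) : Matrix n n ℂ :=
  hA.1.eigenvectorUnitary.1 * diagonal ((↑) ∘ (√·) ∘ hA.1.eigenvalues) *
  (star hA.1.eigenvectorUnitary : Matrix n n ℂ)

lemma posSemidef_sqrt {n : Type*} [Fintype n] [DecidableEq n] {A : Matrix n n ℂ}
    (hA : PosSemidef A) : PosSemidef hA.sqrt := by
  apply PosSemidef.mul_mul_conjTranspose_same
  refine posSemidef_diagonal_iff.mpr fun i ↦ ?_
  rw [Function.comp_apply, Function.comp_apply]
  exact Complex.zero_le_real.mpr (Real.sqrt_nonneg _)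

end Matrix.PosSemidef

/-- `(∑ i, x i * (x i)ᴴ) ^ (1/2)`, the "row" square function. -/
noncomputable def rowSqrt {ι : Type*} [Fintype ι] [DecidableEq ι] {d : ℕ}
    (x : Fin d → Matrix ι ι ℂ) : Matrix ι ι ℂ :=
  (posSemidef_sum_mul_conjTranspose x).sqrt

/-- `(∑ i, (x i)ᴴ * x i) ^ (1/2)`, the "column" square function. -/
noncomputable def colSqrt {ι : Type*} [Fintype ι] [DecidableEq ι] {d : ℕ}
    (x : Fin d → Matrix ι ι ℂ) : Matrix ι ι ℂ :=
  (posSemidef_sum_conjTranspose_mul x).sqrt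

/-- `|y| = (yᴴ y) ^ (1/2)`. -/
noncomputable def absMat {ι : Type*} [Fintype ι] [DecidableEq ι] (y : Matrix ι ι ℂ) :
    Matrix ι ι ℂ :=
  (Matrix.posSemidef_conjTranspose_mul_self y).sqrt

lemma rowSqrt_isHermitian {ι : Type*} [Fintype ι] [DecidableEq ι] {d : ℕ}
    (x : Fin d → Matrix ι ι ℂ) : (rowSqrt x).IsHermitian :=
  (posSemidef_sum_mul_conjTranspose x).posSemidef_sqrt.isHermitian

lemma colSqrt_isHermitian {ι : Type*} [Fintype ι] [DecidableEq ι] {d : ℕ}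
    (x : Fin d → Matrix ι ι ℂ) : (colSqrt x).IsHermitian :=
  (posSemidef_sum_conjTranspose_mul x).posSemidef_sqrt.isHermitian

lemma absMat_isHermitian {ι : Type*} [Fintype ι] [DecidableEq ι] (y : Matrix ι ι ℂ) :
    (absMat y).IsHermitian :=
  (Matrix.posSemidef_conjTranspose_mul_self y).posSemidef_sqrt.isHermitian

/-- The number of eigenvalues (counted with multiplicity) of a Hermitian matrix that are
strictly greater than `s`. -/
noncomputable def eigCount {ι : Type*} [Fintype ι] [DecidableEq ι] {A : Matrix ι ι ℂ}
    (hA : A.IsHermitian) (s : ℝ) : ℕ :=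
  (Finset.univ.filter fun j => s < hA.eigenvalues j).card

/-- `c 1, …, c d ∈ M_m(ℂ)` satisfy the matrix upper `L∞`-Khintchine inequality with
constant `C`. -/
def MatrixUpperKhintchine {m d : ℕ} (c : Fin d → Matrix (Fin m) (Fin m) ℂ) (C : ℝ) : Prop :=
  ∀ (n : ℕ) (x : Fin d → Matrix (Fin n) (Fin n) ℂ),
    opNorm (∑ i, c i ⊗ₖ x i) ≤ C * max (opNorm (rowSqrt x)) (opNorm (colSqrt x))

/- ------------------ auxiliary lemmas ------------------ -/

lemma Matrix.PosSemidef.sqrt_mul_self {n : Type*} [Fintype n] [DecidableEq n]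
    {A : Matrix n n ℂ} (hA : A.PosSemidef) : hA.sqrt * hA.sqrt = A := by
  unfold Matrix.PosSemidef.sqrt
  conv_rhs => rw [hA.1.spectral_theorem, Unitary.conjStarAlgAut_apply]
  have hU : (star hA.1.eigenvectorUnitary : Matrix n n ℂ) * hA.1.eigenvectorUnitary.1 = 1 :=
    Unitary.coe_star_mul_self _
  have hD : diagonal (((↑) ∘ (√·) ∘ hA.1.eigenvalues) : n → ℂ) *
      diagonal (((↑) ∘ (√·) ∘ hA.1.eigenvalues) : n → ℂ) =
      diagonal (RCLike.ofReal ∘ hA.1.eigenvalues : n → ℂ) := by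
    rw [diagonal_mul_diagonal]
    congr 1
    funext i
    simp only [Function.comp_apply]
    rw [← Complex.ofReal_mul, Real.mul_self_sqrt (hA.eigenvalues_nonneg i)]
    rfl
  rw [← hD]
  simp only [Matrix.mul_assoc]
  rw [← Matrix.mul_assoc (star hA.1.eigenvectorUnitary : Matrix n n ℂ) hA.1.eigenvectorUnitary.1,
    hU, Matrix.one_mul]

lemma sqrt_congr {k : ℕ} {A B : Matrix (Fin k) (Fin k) ℂ} (h : A = B)
    (hA : A.PosSemidef) (hB : B.PosSemidef) : hA.sqrt = hB.sqrt := by subst h; rfl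

lemma phi_nonneg {k : ℕ} {A : Matrix (Fin k) (Fin k) ℂ} (hA : A.PosSemidef) :
    0 ≤ Matrix.toEuclideanCLM (𝕜 := ℂ) A := by
  obtain ⟨B, hB⟩ : ∃ B : Matrix (Fin k) (Fin k) ℂ, A = Bᴴ * B :=
    ⟨hA.sqrt, by rw [hA.posSemidef_sqrt.isHermitian.eq, hA.sqrt_mul_self]⟩
  rw [hB, ← Matrix.star_eq_conjTranspose, _root_.map_mul, map_star]
  exact star_mul_self_nonneg _

lemma clm_norm_star_mul_self {k : ℕ}
    (T : EuclideanSpace ℂ (Fin k) →L[ℂ] EuclideanSpace ℂ (Fin k)) :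
    ‖star T * T‖ = ‖T‖ ^ 2 := by
  rw [ContinuousLinearMap.star_eq_adjoint, sq]
  exact ContinuousLinearMap.norm_adjoint_comp_self T

lemma opNorm_conjTranspose_mul_self' {k : ℕ} (M : Matrix (Fin k) (Fin k) ℂ) :
    opNorm (Mᴴ * M) = opNorm M ^ 2 := by
  unfold opNorm
  rw [← Matrix.star_eq_conjTranspose, _root_.map_mul, map_star]
  exact clm_norm_star_mul_self _

lemma opNorm_nonneg {k : ℕ} (M : Matrix (Fin k) (Fin k) ℂ) : 0 ≤ opNorm M :=
  norm_nonneg _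

lemma opNorm_sqrt_sq {k : ℕ} {A : Matrix (Fin k) (Fin k) ℂ} (hA : A.PosSemidef) :
    opNorm hA.sqrt ^ 2 = opNorm A := by
  have h1 : A = hA.sqrtᴴ * hA.sqrt := by
    rw [hA.posSemidef_sqrt.isHermitian.eq, hA.sqrt_mul_self]
  conv_rhs => rw [h1]
  rw [opNorm_conjTranspose_mul_self']

lemma aux_col {k d : ℕ} (x : Fin d → Matrix (Fin k) (Fin k) ℂ) {t : ℝ} (ht : 0 ≤ t)
    (P Q : Matrix (Fin k) (Fin k) ℂ)
    (hP1 : Pᴴ = P) (hQ1 : Qᴴ = Q) (hQ2 : Q * Q = Q)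
    (hPx : opNorm (colSqrt x * P) ≤ t) :
    opNorm (colSqrt (fun i => Q * x i * P)) ≤ t := by
  set y : Fin d → Matrix (Fin k) (Fin k) ℂ := fun i => Q * x i * P with hy
  -- the sums
  set S : Matrix (Fin k) (Fin k) ℂ := ∑ i, (x i)ᴴ * x i with hS
  set B : Matrix (Fin k) (Fin k) ℂ := ∑ i, (y i)ᴴ * y i with hBdef
  have hBpsd : B.PosSemidef := posSemidef_sum_conjTranspose_mul y
  -- B = Pᴴ * (∑ i, (x i)ᴴ * Q * x i) * P
  have hB : B = Pᴴ * (∑ i, (x i)ᴴ * Q * x i) * P := by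
    rw [hBdef, Finset.mul_sum, Finset.sum_mul]
    refine Finset.sum_congr rfl fun i _ => ?_
    simp only [hy, Matrix.conjTranspose_mul, hQ1, Matrix.mul_assoc]
    rw [← Matrix.mul_assoc Q Q, hQ2]
  -- Q ≤ 1 at the operator level
  have hQle : (Matrix.toEuclideanCLM (𝕜 := ℂ) Q) ≤ 1 := by
    have h1Q : ((1 : Matrix (Fin k) (Fin k) ℂ) - Q).PosSemidef := by
      have heq : ((1 : Matrix (Fin k) (Fin k) ℂ) - Q)ᴴ * (1 - Q) = 1 - Q := by
        rw [Matrix.conjTranspose_sub, Matrix.conjTranspose_one, hQ1, Matrix.sub_mul,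
          Matrix.one_mul, Matrix.mul_sub, Matrix.mul_one, hQ2]
        abel
      exact heq ▸ Matrix.posSemidef_conjTranspose_mul_self _
    have h := phi_nonneg h1Q
    rw [map_sub, _root_.map_one] at h
    exact sub_nonneg.mp h
  -- middle inequality
  have hmid : Matrix.toEuclideanCLM (𝕜 := ℂ) (∑ i, (x i)ᴴ * Q * x i) ≤
      Matrix.toEuclideanCLM (𝕜 := ℂ) S := by
    rw [hS, map_sum, map_sum]
    refine Finset.sum_le_sum fun i _ => ?_
    have h := star_left_conjugate_le_conjugate hQle (Matrix.toEuclideanCLM (𝕜 := ℂ) (x i))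
    rw [mul_one] at h
    simp only [_root_.map_mul, ← Matrix.star_eq_conjTranspose, map_star]
    exact h
  -- conjugate by P
  have hconj : Matrix.toEuclideanCLM (𝕜 := ℂ) B ≤ Matrix.toEuclideanCLM (𝕜 := ℂ) (Pᴴ * S * P) := by
    rw [hB]
    have h := star_left_conjugate_le_conjugate hmid (Matrix.toEuclideanCLM (𝕜 := ℂ) P)
    simp only [_root_.map_mul, ← Matrix.star_eq_conjTranspose, map_star]
    exact h
  -- norm comparison
  have hnorm : opNorm B ≤ opNorm (Pᴴ * S * P) :=
    CStarAlgebra.norm_le_norm_of_nonneg_of_le (phi_nonneg hBpsd) hconj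
  -- factor Pᴴ S P
  have hfac : Pᴴ * S * P = (colSqrt x * P)ᴴ * (colSqrt x * P) := by
    rw [Matrix.conjTranspose_mul, (colSqrt_isHermitian x).eq]
    calc Pᴴ * S * P = Pᴴ * (colSqrt x * colSqrt x) * P := by
          rw [colSqrt, (posSemidef_sum_conjTranspose_mul x).sqrt_mul_self]
      _ = Pᴴ * colSqrt x * (colSqrt x * P) := by
          simp only [Matrix.mul_assoc]
  have h2 : opNorm (Pᴴ * S * P) ≤ t ^ 2 := by
    rw [hfac, opNorm_conjTranspose_mul_self']
    exact pow_le_pow_left₀ (opNorm_nonneg _) hPx 2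
  have h3 : opNorm (colSqrt y) ^ 2 ≤ t ^ 2 := by
    rw [colSqrt]
    rw [opNorm_sqrt_sq (posSemidef_sum_conjTranspose_mul y)]
    exact le_trans hnorm h2
  nlinarith [opNorm_nonneg (colSqrt y), h3]

/-- The key intermediate estimate `‖q y p‖ ≤ C t` in the proof of the
paper's Lemma 2.1, for matrix algebras. -/
theorem matrix_khintchine_corner_estimate {m d : ℕ}
    (c : Fin d → Matrix (Fin m) (Fin m) ℂ) (C : ℝ) (hC : 0 < C)
    (hKh : MatrixUpperKhintchine c C)
    {n : ℕ} (hn : 1 ≤ n) (x : Fin d → Matrix (Fin n) (Fin n) ℂ) (t : ℝ) (ht : 0 ≤ t)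
    (P Q : Matrix (Fin n) (Fin n) ℂ)
    (hP1 : Pᴴ = P) (hP2 : P * P = P) (hQ1 : Qᴴ = Q) (hQ2 : Q * Q = Q)
    (hPx : opNorm (colSqrt x * P) ≤ t) (hQx : opNorm (rowSqrt x * Q) ≤ t) :
    opNorm (((1 : Matrix (Fin m) (Fin m) ℂ) ⊗ₖ Q) * (∑ i, c i ⊗ₖ x i)
        * ((1 : Matrix (Fin m) (Fin m) ℂ) ⊗ₖ P)) ≤ C * t := by
  have key : ((1 : Matrix (Fin m) (Fin m) ℂ) ⊗ₖ Q) * (∑ i, c i ⊗ₖ x i)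
      * ((1 : Matrix (Fin m) (Fin m) ℂ) ⊗ₖ P) = ∑ i, c i ⊗ₖ (Q * x i * P) := by
    rw [Finset.mul_sum, Finset.sum_mul]
    refine Finset.sum_congr rfl fun i _ => ?_
    rw [← Matrix.mul_kronecker_mul, ← Matrix.mul_kronecker_mul, one_mul, mul_one]
  rw [key]
  refine (hKh n (fun i => Q * x i * P)).trans ?_
  refine mul_le_mul_of_nonneg_left ?_ hC.le
  refine max_le ?_ ?_
  · -- row part
    have hrow : rowSqrt (fun i => Q * x i * P) = colSqrt (fun i => P * (x i)ᴴ * Q) := by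
      refine sqrt_congr ?_ _ _
      refine Finset.sum_congr rfl fun i _ => ?_
      simp only [Matrix.conjTranspose_mul, Matrix.conjTranspose_conjTranspose, hP1, hQ1,
        Matrix.mul_assoc]
    rw [hrow]
    have hx' : opNorm (colSqrt (fun i => (x i)ᴴ) * Q) ≤ t := by
      have : colSqrt (fun i => (x i)ᴴ) = rowSqrt x := by
        refine sqrt_congr ?_ _ _
        simp only [Matrix.conjTranspose_conjTranspose]
      rwa [this]
    exact aux_col (fun i => (x i)ᴴ) ht Q P hQ1 hP1 hP2 hx'
  · exact aux_col x ht P Q hP1 hQ1 hQ2 hPx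
end

section
/- Let Φ be an Orlicz function satisfying the global Δ₂-condition and the condition p_Φ > 1. Then there exists a constant C_Φ > 0, depending only on Φ, such that: for every σ-finite measure space (S,μ), every d ≥ 1 and all measurable functions x_1,…,x_d : S → ℝ, one has 2^{-d} Σ_{ε ∈ {-1,1}^d} ∫_S Φ(|Σ_{i=1}^d ε_i x_i(s)|) dμ ≤ C_Φ ∫_S Φ((Σ_{i=1}^d x_i(s)²)^{1/2}) dμ. -/
open MeasureTheory Real Finset Filter ENNReal

lemma my_mgf_bound (d : ℕ) (a : Fin d → ℝ) (l : ℝ) :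
    ∑ ε : Fin d → Bool, Real.exp (l * ∑ i, (if ε i then (1:ℝ) else -1) * a i)
      ≤ 2 ^ d * Real.exp (l ^ 2 * (∑ i, a i ^ 2) / 2) := by
  have key : ∑ ε : Fin d → Bool, Real.exp (l * ∑ i, (if ε i then (1:ℝ) else -1) * a i)
      = ∏ i, ∑ b : Bool, Real.exp (l * ((if b then (1:ℝ) else -1) * a i)) := by
    rw [Fintype.prod_sum]
    refine Finset.sum_congr rfl fun ε _ => ?_
    rw [Finset.mul_sum, Real.exp_sum]
  rw [key]
  have h1 : ∀ i : Fin d, ∑ b : Bool, Real.exp (l * ((if b then (1:ℝ) else -1) * a i))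
      ≤ 2 * Real.exp ((l * a i) ^ 2 / 2) := by
    intro i
    rw [Fintype.sum_bool]
    have h := Real.cosh_le_exp_half_sq (l * a i)
    rw [Real.cosh_eq] at h
    have e1 : l * ((if (true : Bool) then (1:ℝ) else -1) * a i) = l * a i := by norm_num
    have e2 : l * ((if (false : Bool) then (1:ℝ) else -1) * a i) = -(l * a i) := by
      norm_num
    rw [e1, e2]
    linarith
  calc ∏ i, ∑ b : Bool, Real.exp (l * ((if b then (1:ℝ) else -1) * a i))
      ≤ ∏ i, 2 * Real.exp ((l * a i) ^ 2 / 2) := by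
        refine Finset.prod_le_prod (fun i _ => ?_) (fun i _ => h1 i)
        positivity
    _ = 2 ^ d * Real.exp (l ^ 2 * (∑ i, a i ^ 2) / 2) := by
        rw [Finset.prod_mul_distrib, Finset.prod_const, Finset.card_univ, Fintype.card_fin,
          ← Real.exp_sum]
        congr 1
        simp [mul_pow, Finset.mul_sum, Finset.sum_div]

lemma my_chernoff (d : ℕ) (a : Fin d → ℝ) (u l : ℝ) (hl : 0 ≤ l) :
    ((Finset.univ.filter (fun ε : Fin d → Bool =>
        u ≤ ∑ i, (if ε i then (1:ℝ) else -1) * a i)).card : ℝ)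
      ≤ 2 ^ d * Real.exp (l ^ 2 * (∑ i, a i ^ 2) / 2 - l * u) := by
  set Z : (Fin d → Bool) → ℝ := fun ε => ∑ i, (if ε i then (1:ℝ) else -1) * a i with hZ
  set F := Finset.univ.filter (fun ε : Fin d → Bool => u ≤ Z ε) with hF
  have h1 : (F.card : ℝ) * Real.exp (l * u) ≤ ∑ ε : Fin d → Bool, Real.exp (l * Z ε) := by
    calc (F.card : ℝ) * Real.exp (l * u) = ∑ _ε ∈ F, Real.exp (l * u) := by
          rw [Finset.sum_const, nsmul_eq_mul]
      _ ≤ ∑ ε ∈ F, Real.exp (l * Z ε) := by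
          refine Finset.sum_le_sum fun ε hε => ?_
          have := (Finset.mem_filter.mp hε).2
          exact Real.exp_le_exp.mpr (mul_le_mul_of_nonneg_left this hl)
      _ ≤ ∑ ε : Fin d → Bool, Real.exp (l * Z ε) :=
          Finset.sum_le_sum_of_subset_of_nonneg (Finset.filter_subset _ _)
            (fun ε _ _ => (Real.exp_pos _).le)
  have h2 := my_mgf_bound d a l
  have h3 : (F.card : ℝ) * Real.exp (l * u) ≤ 2 ^ d * Real.exp (l ^ 2 * (∑ i, a i ^ 2) / 2) :=
    h1.trans h2
  have h4 : (F.card : ℝ) ≤ 2 ^ d * Real.exp (l ^ 2 * (∑ i, a i ^ 2) / 2) / Real.exp (l * u) :=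
    (le_div_iff₀ (Real.exp_pos _)).mpr h3
  calc (F.card : ℝ) ≤ _ := h4
    _ = 2 ^ d * Real.exp (l ^ 2 * (∑ i, a i ^ 2) / 2 - l * u) := by
        rw [Real.exp_sub, mul_div_assoc]

lemma my_tail (d : ℕ) (a : Fin d → ℝ) (u l : ℝ) (hl : 0 ≤ l) :
    ((Finset.univ.filter (fun ε : Fin d → Bool =>
        u ≤ |∑ i, (if ε i then (1:ℝ) else -1) * a i|)).card : ℝ)
      ≤ 2 ^ (d + 1) * Real.exp (l ^ 2 * (∑ i, a i ^ 2) / 2 - l * u) := by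
  classical
  set Z : (Fin d → Bool) → ℝ := fun ε => ∑ i, (if ε i then (1:ℝ) else -1) * a i with hZ
  have hsub : Finset.univ.filter (fun ε : Fin d → Bool => u ≤ |Z ε|)
      ⊆ (Finset.univ.filter (fun ε : Fin d → Bool => u ≤ Z ε))
        ∪ (Finset.univ.filter (fun ε : Fin d → Bool => u ≤ -Z ε)) := by
    intro ε hε
    have h := (Finset.mem_filter.mp hε).2
    rcases le_abs.mp h with h' | h'
    · exact Finset.mem_union_left _ (Finset.mem_filter.mpr ⟨Finset.mem_univ _, h'⟩)
    · exact Finset.mem_union_right _ (Finset.mem_filter.mpr ⟨Finset.mem_univ _, h'⟩)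
  have hcard : ((Finset.univ.filter (fun ε : Fin d → Bool => u ≤ |Z ε|)).card : ℝ)
      ≤ ((Finset.univ.filter (fun ε : Fin d → Bool => u ≤ Z ε)).card : ℝ)
        + ((Finset.univ.filter (fun ε : Fin d → Bool => u ≤ -Z ε)).card : ℝ) := by
    have := (Finset.card_le_card hsub).trans (Finset.card_union_le _ _)
    exact_mod_cast this
  have hneg : ∀ ε : Fin d → Bool, (-Z ε) = ∑ i, (if ε i then (1:ℝ) else -1) * (-a) i := by
    intro ε
    simp only [hZ, Pi.neg_apply, ← Finset.sum_neg_distrib]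
    exact Finset.sum_congr rfl fun i _ => by ring
  have h2 : ((Finset.univ.filter (fun ε : Fin d → Bool => u ≤ -Z ε)).card : ℝ)
      ≤ 2 ^ d * Real.exp (l ^ 2 * (∑ i, a i ^ 2) / 2 - l * u) := by
    have := my_chernoff d (-a) u l hl
    have e1 : (Finset.univ.filter (fun ε : Fin d → Bool =>
        u ≤ ∑ i, (if ε i then (1:ℝ) else -1) * (-a) i))
        = Finset.univ.filter (fun ε : Fin d → Bool => u ≤ -Z ε) := by
      refine Finset.filter_congr fun ε _ => ?_
      rw [hneg ε]
    have e2 : ∑ i, ((-a) i) ^ 2 = ∑ i, a i ^ 2 := by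
      refine Finset.sum_congr rfl fun i _ => by simp [neg_sq]
    rw [e1, e2] at this
    exact this
  have h1 := my_chernoff d a u l hl
  have : ((Finset.univ.filter (fun ε : Fin d → Bool => u ≤ |Z ε|)).card : ℝ)
      ≤ 2 ^ d * Real.exp (l ^ 2 * (∑ i, a i ^ 2) / 2 - l * u)
        + 2 ^ d * Real.exp (l ^ 2 * (∑ i, a i ^ 2) / 2 - l * u) :=
    hcard.trans (add_le_add h1 h2)
  calc ((Finset.univ.filter (fun ε : Fin d → Bool => u ≤ |Z ε|)).card : ℝ) ≤ _ := this
    _ = 2 ^ (d + 1) * Real.exp (l ^ 2 * (∑ i, a i ^ 2) / 2 - l * u) := by ring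

lemma my_summable (K : ℝ) (hK : 1 ≤ K) :
    Summable (fun k : ℕ => K ^ (k + 1) * Real.exp (-(4 ^ k : ℝ) / 2)) := by
  have hK0 : 0 < K := lt_of_lt_of_le one_pos hK
  refine summable_of_ratio_norm_eventually_le (r := 1/2) (by norm_num) ?_
  have h4 : Tendsto (fun k : ℕ => (4:ℝ) ^ k) atTop atTop :=
    tendsto_pow_atTop_atTop_of_one_lt (by norm_num)
  have h5 : Tendsto (fun k : ℕ => (3/2 : ℝ) * 4 ^ k) atTop atTop :=
    (tendsto_const_mul_atTop_of_pos (by norm_num)).mpr h4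
  have h6 : Tendsto (fun k : ℕ => -((3/2 : ℝ) * 4 ^ k)) atTop atBot :=
    tendsto_neg_atBot_iff.mpr h5
  have h7 : Tendsto (fun k : ℕ => K * Real.exp (-((3/2 : ℝ) * 4 ^ k))) atTop (nhds 0) := by
    have := Real.tendsto_exp_atBot.comp h6
    simpa using this.const_mul K
  have h8 : ∀ᶠ k : ℕ in atTop, K * Real.exp (-((3/2 : ℝ) * 4 ^ k)) < 1/2 :=
    h7.eventually_lt_const (by norm_num)
  filter_upwards [h8] with k hk
  have hpos : (0:ℝ) < K ^ (k + 1) * Real.exp (-(4 ^ k : ℝ) / 2) := by positivity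
  have hpos2 : (0:ℝ) < K ^ (k + 2) * Real.exp (-(4 ^ (k+1) : ℝ) / 2) := by positivity
  rw [Real.norm_eq_abs, Real.norm_eq_abs, abs_of_pos hpos2, abs_of_pos hpos]
  have he : Real.exp (-((3/2 : ℝ) * 4 ^ k)) * Real.exp (-(4 ^ k : ℝ) / 2)
      = Real.exp (-(4 ^ (k+1) : ℝ) / 2) := by
    rw [← Real.exp_add]
    congr 1
    rw [pow_succ]
    ring
  have key : K ^ (k + 2) * Real.exp (-(4 ^ (k+1) : ℝ) / 2)
      = (K * Real.exp (-((3/2 : ℝ) * 4 ^ k))) * (K ^ (k + 1) * Real.exp (-(4 ^ k : ℝ) / 2)) := by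
    rw [← he]
    ring
  rw [key]
  exact mul_le_mul_of_nonneg_right hk.le (by positivity)

lemma my_delta2_iter (Φ : ℝ → ℝ) (K : ℝ) (hK : 1 ≤ K)
    (hΔ2 : ∀ t ≥ (0:ℝ), Φ (2 * t) ≤ K * Φ t) :
    ∀ n : ℕ, ∀ t ≥ (0:ℝ), Φ (2 ^ n * t) ≤ K ^ n * Φ t := by
  intro n
  induction n with
  | zero => intro t _; simp
  | succ n ih =>
    intro t ht
    have h1 : (2:ℝ) ^ (n+1) * t = 2 * (2 ^ n * t) := by ring
    rw [h1]
    calc Φ (2 * (2 ^ n * t)) ≤ K * Φ (2 ^ n * t) := hΔ2 _ (by positivity)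
      _ ≤ K * (K ^ n * Φ t) :=
          mul_le_mul_of_nonneg_left (ih t ht) (le_trans zero_le_one hK)
      _ = K ^ (n+1) * Φ t := by ring

lemma my_pointwise (Φ : ℝ → ℝ) (hΦ0 : Φ 0 = 0) (hΦmono : MonotoneOn Φ (Set.Ici 0))
    (hΦnonneg : ∀ t ≥ (0 : ℝ), 0 ≤ Φ t)
    (K : ℝ) (hK : 1 ≤ K) (hΔ2 : ∀ t ≥ (0 : ℝ), Φ (2 * t) ≤ K * Φ t)
    (p cp : ℝ) (hp : 1 < p) (hcp : 0 < cp)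
    (hpΦ : ∀ s ∈ Set.Ioc (0 : ℝ) 1, ∀ t ≥ (0 : ℝ), Φ (s * t) ≤ cp * s ^ p * Φ t)
    (d : ℕ) (a : Fin d → ℝ) :
    ∑ ε : Fin d → Bool, Φ |∑ i, (if ε i then (1:ℝ) else -1) * a i|
      ≤ 2 ^ d * ((cp + 2 * ∑' k : ℕ, K ^ (k + 1) * Real.exp (-(4 ^ k : ℝ) / 2))
          * Φ (Real.sqrt (∑ i, a i ^ 2))) := by
  classical
  set Z : (Fin d → Bool) → ℝ := fun ε => ∑ i, (if ε i then (1:ℝ) else -1) * a i with hZ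
  set σ2 : ℝ := ∑ i, a i ^ 2 with hσ2
  set σ : ℝ := Real.sqrt σ2 with hσ
  set T : ℝ := ∑' k : ℕ, K ^ (k + 1) * Real.exp (-(4 ^ k : ℝ) / 2) with hT
  have hK0 : (0:ℝ) < K := lt_of_lt_of_le one_pos hK
  have hσ2nn : 0 ≤ σ2 := Finset.sum_nonneg fun i _ => sq_nonneg _
  have hσnn : 0 ≤ σ := Real.sqrt_nonneg _
  have hΦσ : 0 ≤ Φ σ := hΦnonneg σ hσnn
  have hTnn : 0 ≤ T := tsum_nonneg fun k => by positivity
  have hsummable := my_summable K hK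
  by_cases hzero : σ2 = 0
  · have ha : ∀ i, a i = 0 := by
      intro i
      have := (Finset.sum_eq_zero_iff_of_nonneg (fun i _ => sq_nonneg (a i))).mp hzero i
        (Finset.mem_univ i)
      exact (pow_eq_zero_iff two_ne_zero).mp this
    have hZ0 : ∀ ε : Fin d → Bool, Z ε = 0 := by
      intro ε
      simp only [hZ]
      exact Finset.sum_eq_zero fun i _ => by rw [ha i, mul_zero]
    have hL : ∑ ε : Fin d → Bool, Φ |Z ε| = 0 :=
      Finset.sum_eq_zero fun ε _ => by rw [hZ0 ε, abs_zero, hΦ0]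
    rw [hL]
    have hσ0 : σ = 0 := by rw [hσ, hzero, Real.sqrt_zero]
    rw [hσ0] at hΦσ ⊢
    positivity
  · have hσ2pos : 0 < σ2 := lt_of_le_of_ne hσ2nn (Ne.symm hzero)
    have hσpos : 0 < σ := Real.sqrt_pos.mpr hσ2pos
    have hσsq : σ ^ 2 = σ2 := Real.sq_sqrt hσ2nn
    have hite_nn : ∀ (r : ℝ) (k : ℕ),
        0 ≤ (if 2 ^ k * σ ≤ r then K ^ (k + 1) * Φ σ else 0) := by
      intro r k
      split
      · positivity
      · exact le_refl 0
    have stepA : ∀ ε : Fin d → Bool, Φ |Z ε| ≤ cp * Φ σ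
        + ∑ k ∈ Finset.range (d + 1),
            (if 2 ^ k * σ ≤ |Z ε| then K ^ (k + 1) * Φ σ else 0) := by
      intro ε
      have hsum_nn : 0 ≤ ∑ k ∈ Finset.range (d + 1),
          (if 2 ^ k * σ ≤ |Z ε| then K ^ (k + 1) * Φ σ else 0) :=
        Finset.sum_nonneg fun k _ => hite_nn _ k
      by_cases hle : |Z ε| ≤ σ
      · rcases eq_or_lt_of_le (abs_nonneg (Z ε)) with h0 | h0
        · rw [← h0, hΦ0]
          positivity
        · set s : ℝ := |Z ε| / σ with hs
          have hs1 : s ∈ Set.Ioc (0:ℝ) 1 := ⟨div_pos h0 hσpos, (div_le_one hσpos).mpr hle⟩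
          have hZeq : s * σ = |Z ε| := div_mul_cancel₀ _ (ne_of_gt hσpos)
          have hmain := hpΦ s hs1 σ hσnn
          rw [hZeq] at hmain
          have hsp : s ^ p ≤ 1 := Real.rpow_le_one hs1.1.le hs1.2 (by linarith)
          have h2 : cp * s ^ p * Φ σ ≤ cp * Φ σ := by
            have h3 : cp * s ^ p ≤ cp * 1 := mul_le_mul_of_nonneg_left hsp hcp.le
            nlinarith [hΦσ]
          linarith
      · push_neg at hle
        have hCS : (Z ε) ^ 2 ≤ (d : ℝ) * σ2 := by
          have hcs := Finset.sum_mul_sq_le_sq_mul_sq Finset.univ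
            (fun i : Fin d => (if ε i then (1:ℝ) else -1)) a
          have hc2 : ∑ i : Fin d, (if ε i then (1:ℝ) else -1) ^ 2 = (d:ℝ) := by
            have he1 : ∀ i : Fin d, (if ε i then (1:ℝ) else -1) ^ 2 = 1 := by
              intro i; split <;> norm_num
            simp [he1]
          calc (Z ε)^2 = (∑ i, (if ε i then (1:ℝ) else -1) * a i)^2 := rfl
            _ ≤ (∑ i, (if ε i then (1:ℝ) else -1)^2) * ∑ i, a i^2 := hcs
            _ = (d:ℝ) * σ2 := by rw [hc2]
        have h24 : ((2:ℝ)^d)^2 = 4^d := by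
          rw [← pow_mul, show (4:ℝ) = 2^2 by norm_num, ← pow_mul, mul_comm]
        have hZle : |Z ε| ≤ 2 ^ d * σ := by
          have hd4 : (d:ℝ) ≤ 4 ^ d := by
            calc (d:ℝ) ≤ 2^d := by exact_mod_cast (Nat.lt_two_pow_self (n := d)).le
              _ ≤ 4^d := pow_le_pow_left₀ (by norm_num) (by norm_num) d
          have hsq2 : (Z ε)^2 ≤ (2^d*σ)^2 := by
            calc (Z ε)^2 ≤ (d:ℝ)*σ2 := hCS
              _ ≤ 4^d * σ2 := mul_le_mul_of_nonneg_right hd4 hσ2nn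
              _ = (2^d*σ)^2 := by rw [mul_pow, h24, hσsq]
          calc |Z ε| = Real.sqrt ((Z ε)^2) := (Real.sqrt_sq_eq_abs _).symm
            _ ≤ Real.sqrt ((2^d*σ)^2) := Real.sqrt_le_sqrt hsq2
            _ = 2^d*σ := Real.sqrt_sq (by positivity)
        have hex : ∃ n : ℕ, |Z ε| < 2 ^ (n+1) * σ := by
          refine ⟨d, lt_of_le_of_lt hZle ?_⟩
          have h2d : (2:ℝ)^d < 2^(d+1) := by
            have : (2:ℝ)^d * 1 < 2^d * 2 := by
              have := pow_pos (show (0:ℝ) < 2 by norm_num) d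
              linarith
            simpa [pow_succ] using this
          exact mul_lt_mul_of_pos_right h2d hσpos
        have hupper : |Z ε| < 2 ^ (Nat.find hex + 1) * σ := Nat.find_spec hex
        have hdprop : |Z ε| < 2 ^ (d + 1) * σ := by
          refine lt_of_le_of_lt hZle ?_
          have h2d : (2:ℝ)^d < 2^(d+1) := by
            have hp2 := pow_pos (show (0:ℝ) < 2 by norm_num) d
            have : (2:ℝ)^d * 1 < 2^d * 2 := by linarith
            simpa [pow_succ] using this
          exact mul_lt_mul_of_pos_right h2d hσpos
        have hk₀d : Nat.find hex ≤ d := Nat.find_min' hex hdprop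
        have hlower : 2 ^ (Nat.find hex) * σ ≤ |Z ε| := by
          rcases Nat.eq_zero_or_pos (Nat.find hex) with h | h
          · rw [h]
            simpa using hle.le
          · obtain ⟨m, hm⟩ : ∃ m, Nat.find hex = m + 1 :=
              ⟨Nat.find hex - 1, (Nat.succ_pred_eq_of_pos h).symm⟩
            have hmlt : m < Nat.find hex := by omega
            have hmin := Nat.find_min hex hmlt
            push_neg at hmin
            rw [hm]
            exact hmin
        have hmono2 : Φ |Z ε| ≤ Φ (2 ^ (Nat.find hex + 1) * σ) :=
          hΦmono (Set.mem_Ici.mpr (abs_nonneg _)) (Set.mem_Ici.mpr (by positivity)) hupper.le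
        have hiter := my_delta2_iter Φ K hK hΔ2 (Nat.find hex + 1) σ hσnn
        have hterm : (if 2 ^ (Nat.find hex) * σ ≤ |Z ε| then K ^ (Nat.find hex + 1) * Φ σ else 0)
            ≤ ∑ k ∈ Finset.range (d + 1), (if 2 ^ k * σ ≤ |Z ε| then K ^ (k + 1) * Φ σ else 0) :=
          Finset.single_le_sum (fun k _ => hite_nn _ k)
            (Finset.mem_range.mpr (Nat.lt_succ_of_le hk₀d))
        rw [if_pos hlower] at hterm
        have hcpΦ : 0 ≤ cp * Φ σ := mul_nonneg hcp.le hΦσ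
        linarith [hmono2.trans hiter]
    have hcard : (Finset.univ : Finset (Fin d → Bool)).card = 2 ^ d := by
      simp
    calc ∑ ε : Fin d → Bool, Φ |Z ε|
        ≤ ∑ ε : Fin d → Bool, (cp * Φ σ + ∑ k ∈ Finset.range (d + 1),
            (if 2 ^ k * σ ≤ |Z ε| then K ^ (k + 1) * Φ σ else 0)) :=
          Finset.sum_le_sum fun ε _ => stepA ε
      _ = 2 ^ d * (cp * Φ σ) + ∑ k ∈ Finset.range (d + 1), ∑ ε : Fin d → Bool,
            (if 2 ^ k * σ ≤ |Z ε| then K ^ (k + 1) * Φ σ else 0) := by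
          rw [Finset.sum_add_distrib, Finset.sum_const, hcard, Finset.sum_comm,
            nsmul_eq_mul]
          push_cast
          ring_nf
      _ ≤ 2 ^ d * (cp * Φ σ) + ∑ k ∈ Finset.range (d + 1),
            (2 ^ (d+1) * Real.exp (-((4:ℝ) ^ k)/2)) * (K ^ (k + 1) * Φ σ) := by
          refine add_le_add_right (Finset.sum_le_sum fun k _ => ?_) _
          rw [← Finset.sum_filter, Finset.sum_const, nsmul_eq_mul]
          have htail := my_tail d a (2^k*σ) (2^k/σ) (by positivity)
          have hσne : σ ≠ 0 := ne_of_gt hσpos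
          have h4k : ((2:ℝ)^k)^2 = 4^k := by
            rw [← pow_mul, show (4:ℝ) = 2^2 by norm_num, ← pow_mul, mul_comm]
          have hexp : ((2:ℝ)^k/σ)^2 * σ2/2 - ((2:ℝ)^k/σ)*((2:ℝ)^k*σ) = -((4:ℝ)^k)/2 := by
            rw [← hσsq, ← h4k]
            field_simp
            ring
          rw [hexp] at htail
          exact mul_le_mul_of_nonneg_right htail (by positivity)
      _ = 2^d*(cp*Φ σ) + 2^(d+1)*(Φ σ)
            * ∑ k ∈ Finset.range (d+1), K^(k+1)*Real.exp (-((4:ℝ)^k)/2) := by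
          rw [Finset.mul_sum]
          congr 1
          exact Finset.sum_congr rfl fun k _ => by ring
      _ ≤ 2^d*(cp*Φ σ) + 2^(d+1)*(Φ σ) * T := by
          have hpart : ∑ k ∈ Finset.range (d+1), K^(k+1)*Real.exp (-((4:ℝ)^k)/2) ≤ T :=
            Summable.sum_le_tsum (Finset.range (d+1)) (fun k _ => by positivity) hsummable
          exact add_le_add_right (mul_le_mul_of_nonneg_left hpart
            (mul_nonneg (by positivity) hΦσ)) _
      _ = 2 ^ d * ((cp + 2 * T) * Φ σ) := by ring

lemma my_lintegral_sum_le {α : Type} [MeasurableSpace α] (μ : Measure α) {ι : Type*}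
    (s : Finset ι) (f : ι → α → ℝ≥0∞) :
    ∑ i ∈ s, ∫⁻ x, f i x ∂μ ≤ ∫⁻ x, ∑ i ∈ s, f i x ∂μ := by
  classical
  induction s using Finset.induction with
  | empty => simp
  | @insert a s ha ih =>
    rw [Finset.sum_insert ha]
    calc (∫⁻ x, f a x ∂μ) + ∑ i ∈ s, ∫⁻ x, f i x ∂μ
        ≤ (∫⁻ x, f a x ∂μ) + ∫⁻ x, ∑ i ∈ s, f i x ∂μ := add_le_add_right ih _
      _ ≤ ∫⁻ x, f a x + ∑ i ∈ s, f i x ∂μ := le_lintegral_add _ _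
      _ = ∫⁻ x, ∑ i ∈ insert a s, f i x ∂μ := by
          refine lintegral_congr fun x => ?_
          rw [Finset.sum_insert ha]

/-- The commutative instance of the paper's Corollary 3.2: a Φ-moment
Khintchine inequality for Rademacher averages, for an Orlicz function `Φ` satisfying the
global Δ₂-condition and `p_Φ > 1`, with a constant depending only on `Φ`. -/
theorem scalar_rademacher_orlicz_khintchine
    (Φ : ℝ → ℝ) (hΦ0 : Φ 0 = 0) (hΦmono : MonotoneOn Φ (Set.Ici 0))
    (hΦconv : ConvexOn ℝ (Set.Ici 0) Φ) (hΦcont : ContinuousOn Φ (Set.Ici 0))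
    (hΦnonneg : ∀ t ≥ (0 : ℝ), 0 ≤ Φ t)
    (K : ℝ) (hK : 1 ≤ K) (hΔ2 : ∀ t ≥ (0 : ℝ), Φ (2 * t) ≤ K * Φ t)
    (p cp : ℝ) (hp : 1 < p) (hcp : 0 < cp)
    (hpΦ : ∀ s ∈ Set.Ioc (0 : ℝ) 1, ∀ t ≥ (0 : ℝ), Φ (s * t) ≤ cp * s ^ p * Φ t) :
    ∃ CΦ : ℝ, 0 < CΦ ∧
      ∀ (S : Type) [MeasurableSpace S] (μ : Measure S), SigmaFinite μ →
        ∀ (d : ℕ), 1 ≤ d → ∀ x : Fin d → S → ℝ, (∀ i, Measurable (x i)) →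
          (∑ ε : Fin d → Bool,
              ∫⁻ s, ENNReal.ofReal (Φ |∑ i, (if ε i then (1 : ℝ) else -1) * x i s|) ∂μ) / 2 ^ d
            ≤ ENNReal.ofReal CΦ *
                ∫⁻ s, ENNReal.ofReal (Φ (Real.sqrt (∑ i, x i s ^ 2))) ∂μ := by
  classical
  set T : ℝ := ∑' k : ℕ, K ^ (k + 1) * Real.exp (-(4 ^ k : ℝ) / 2) with hT
  have hK0 : (0:ℝ) < K := lt_of_lt_of_le one_pos hK
  have hTnn : 0 ≤ T := tsum_nonneg fun k => by positivity
  set C : ℝ := cp + 2 * T with hC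
  have hCpos : 0 < C := by positivity
  refine ⟨C, hCpos, ?_⟩
  intro S _ μ _ d _ x _
  set I : ℝ≥0∞ := ∫⁻ s, ENNReal.ofReal (Φ (Real.sqrt (∑ i, x i s ^ 2))) ∂μ with hI
  have key : ∀ s : S,
      ∑ ε : Fin d → Bool, ENNReal.ofReal (Φ |∑ i, (if ε i then (1 : ℝ) else -1) * x i s|)
        ≤ ENNReal.ofReal (2 ^ d * C) * ENNReal.ofReal (Φ (Real.sqrt (∑ i, x i s ^ 2))) := by
    intro s
    rw [← ENNReal.ofReal_sum_of_nonneg (fun ε _ => hΦnonneg _ (abs_nonneg _)),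
      ← ENNReal.ofReal_mul (by positivity)]
    refine ENNReal.ofReal_le_ofReal ?_
    have := my_pointwise Φ hΦ0 hΦmono hΦnonneg K hK hΔ2 p cp hp hcp hpΦ d (fun i => x i s)
    calc ∑ ε : Fin d → Bool, Φ |∑ i, (if ε i then (1 : ℝ) else -1) * x i s|
        ≤ 2 ^ d * ((cp + 2 * T) * Φ (Real.sqrt (∑ i, x i s ^ 2))) := this
      _ = 2 ^ d * C * Φ (Real.sqrt (∑ i, x i s ^ 2)) := by rw [hC]; ring
  have main : (∑ ε : Fin d → Bool,
      ∫⁻ s, ENNReal.ofReal (Φ |∑ i, (if ε i then (1 : ℝ) else -1) * x i s|) ∂μ)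
        ≤ ENNReal.ofReal (2 ^ d * C) * I := by
    calc ∑ ε : Fin d → Bool,
        ∫⁻ s, ENNReal.ofReal (Φ |∑ i, (if ε i then (1 : ℝ) else -1) * x i s|) ∂μ
        ≤ ∫⁻ s, ∑ ε : Fin d → Bool,
            ENNReal.ofReal (Φ |∑ i, (if ε i then (1 : ℝ) else -1) * x i s|) ∂μ :=
          my_lintegral_sum_le μ Finset.univ _
      _ ≤ ∫⁻ s, ENNReal.ofReal (2 ^ d * C)
            * ENNReal.ofReal (Φ (Real.sqrt (∑ i, x i s ^ 2))) ∂μ := lintegral_mono key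
      _ = ENNReal.ofReal (2 ^ d * C) * I :=
          lintegral_const_mul' _ _ ENNReal.ofReal_ne_top
  have h2d : (ENNReal.ofReal (2 ^ d * C)) = 2 ^ d * ENNReal.ofReal C := by
    rw [ENNReal.ofReal_mul (by positivity), ENNReal.ofReal_pow (by norm_num)]
    norm_num
  rw [ENNReal.div_le_iff (by positivity) (by simp [ENNReal.pow_ne_top])]
  calc (∑ ε : Fin d → Bool,
      ∫⁻ s, ENNReal.ofReal (Φ |∑ i, (if ε i then (1 : ℝ) else -1) * x i s|) ∂μ)
      ≤ ENNReal.ofReal (2 ^ d * C) * I := main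
    _ = ENNReal.ofReal C * I * 2 ^ d := by rw [h2d]; ring
end

section
/- Let 1 ≤ p ≤ q < ∞, let (S,μ) be a σ-finite measure space, and let x_1,…,x_d : S → ℂ be measurable. Then (2^{-d} Σ_{ε ∈ {-1,1}^d} ∫_S |Σ_{i=1}^d ε_i x_i(s)|^p dμ)^{1/p} ≤ 4√q · 2^{1/p} · (∫_S (Σ_{i=1}^d |x_i(s)|²)^{p/2} dμ)^{1/p}. -/
open MeasureTheory

/-- Double factorial `(2k-1)!! = 1 * 3 * ... * (2k-1)`. -/
def khDF : ℕ → ℕ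
  | 0 => 0 + 1
  | (k+1) => (2*k+1) * khDF k

lemma khDF_pos (k : ℕ) : 0 < khDF k := by
  induction k with
  | zero => simp [khDF]
  | succ k ih => simp only [khDF]; positivity

lemma khDF_fact (k : ℕ) : 2^k * k.factorial * khDF k = (2*k).factorial := by
  induction k with
  | zero => simp [khDF]
  | succ k ih =>
    have h2 : 2*(k+1) = (2*k+1) + 1 := by ring
    rw [h2, Nat.factorial_succ, ← h2]
    have : 2*(k+1) = 2*k + 2 := by ring
    rw [this] at *
    rw [Nat.factorial_succ]
    calc 2^(k+1) * (k+1).factorial * khDF (k+1)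
        = (2*k+2) * ((2*k+1) * (2^k * k.factorial * khDF k)) := by
          simp [khDF, Nat.factorial_succ, pow_succ]; ring
      _ = (2*k+2) * ((2*k+1) * (2*k).factorial) := by rw [ih]
      _ = (2*k+2) * (2*k+1).factorial := by rw [Nat.factorial_succ]

lemma two_pow_mul_fact_le (j : ℕ) : 2^j * j.factorial ≤ (2*j).factorial := by
  induction j with
  | zero => simp
  | succ j ih =>
    have h : 2*(j+1) = (2*j+1)+1 := by ring
    rw [h, Nat.factorial_succ, Nat.factorial_succ, Nat.factorial_succ]
    calc 2^(j+1) * ((j+1) * j.factorial) = (2*j+2) * (2^j * j.factorial) := by ring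
      _ ≤ (2*j+2) * (2*j).factorial := Nat.mul_le_mul_left _ ih
      _ ≤ (2*j+2) * ((2*j+1) * (2*j).factorial) := by
          exact Nat.mul_le_mul_left _ (Nat.le_mul_of_pos_left _ (Nat.succ_pos _))

lemma choose_khDF_le {j k : ℕ} (hjk : j ≤ k) :
    (2*k).choose (2*j) * khDF (k-j) ≤ khDF k * k.choose j := by
  have h1 : (2*k).choose (2*j) * (2*j).factorial * (2*(k-j)).factorial = (2*k).factorial := by
    have := Nat.choose_mul_factorial_mul_factorial (Nat.mul_le_mul_left 2 hjk)
    have h2 : 2*k - 2*j = 2*(k-j) := by omega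
    rw [h2] at this; linarith [this]
  -- multiply both sides by M := 2^(k-j) * (k-j)! * (2j)! * j!
  have key : (2*k).choose (2*j) * khDF (k-j) * (2^(k-j) * (k-j).factorial * (2*j).factorial * j.factorial)
      ≤ khDF k * k.choose j * (2^(k-j) * (k-j).factorial * (2*j).factorial * j.factorial) := by
    have lhs_eq : (2*k).choose (2*j) * khDF (k-j) * (2^(k-j) * (k-j).factorial * (2*j).factorial * j.factorial)
        = (2*k).factorial * j.factorial := by
      calc (2*k).choose (2*j) * khDF (k-j) * (2^(k-j) * (k-j).factorial * (2*j).factorial * j.factorial)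
          = ((2*k).choose (2*j) * (2*j).factorial * (2^(k-j) * (k-j).factorial * khDF (k-j))) * j.factorial := by ring
        _ = ((2*k).choose (2*j) * (2*j).factorial * (2*(k-j)).factorial) * j.factorial := by rw [khDF_fact]
        _ = (2*k).factorial * j.factorial := by
            rw [← h1]; try ring
    have rhs_eq : khDF k * k.choose j * (2^(k-j) * (k-j).factorial * (2*j).factorial * j.factorial)
        = khDF k * 2^(k-j) * (2*j).factorial * k.factorial := by
      have := Nat.choose_mul_factorial_mul_factorial hjk
      calc khDF k * k.choose j * (2^(k-j) * (k-j).factorial * (2*j).factorial * j.factorial)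
          = khDF k * 2^(k-j) * (2*j).factorial * (k.choose j * j.factorial * (k-j).factorial) := by ring
        _ = khDF k * 2^(k-j) * (2*j).factorial * k.factorial := by rw [this]
    rw [lhs_eq, rhs_eq]
    have hfact : (2*k).factorial = 2^k * k.factorial * khDF k := (khDF_fact k).symm
    rw [hfact]
    have hpow : (2:ℕ)^k = 2^(k-j) * 2^j := by rw [← pow_add]; congr 1; omega
    rw [hpow]
    calc 2^(k-j) * 2^j * k.factorial * khDF k * j.factorial
        = (2^j * j.factorial) * (2^(k-j) * k.factorial * khDF k) := by ring
      _ ≤ (2*j).factorial * (2^(k-j) * k.factorial * khDF k) :=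
          Nat.mul_le_mul_right _ (two_pow_mul_fact_le j)
      _ = khDF k * 2^(k-j) * (2*j).factorial * k.factorial := by ring
  have hMpos : 0 < 2^(k-j) * (k-j).factorial * (2*j).factorial * j.factorial := by positivity
  exact Nat.le_of_mul_le_mul_right key hMpos

open Finset

lemma sum_even_vanish (n : ℕ) (g : ℕ → ℝ) (hg : ∀ m, Odd m → g m = 0) :
    ∑ m ∈ range (2*n+1), g m = ∑ j ∈ range (n+1), g (2*j) := by
  induction n with
  | zero => simp
  | succ n ih =>
    have h : 2*(n+1)+1 = (2*n+1) + 1 + 1 := by ring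
    have h1 : g (2*n+1) = 0 := hg _ ⟨n, by ring⟩
    have h2 : 2*n+1+1 = 2*(n+1) := by ring
    rw [h, Finset.sum_range_succ, Finset.sum_range_succ, ih, h1, h2,
      Finset.sum_range_succ (fun j => g (2*j)) (n+1)]
    ring

lemma even_expand (S c : ℝ) (k : ℕ) :
    (S + c)^(2*k) + (S - c)^(2*k)
      = ∑ j ∈ range (k+1), 2 * ((2*k).choose (2*j) : ℝ) * S^(2*(k-j)) * c^(2*j) := by
  have h1 : (S + c)^(2*k) = ∑ m ∈ range (2*k+1), c^m * S^(2*k-m) * ((2*k).choose m : ℝ) := by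
    rw [add_comm S c, add_pow]
  have h2 : (S - c)^(2*k) = ∑ m ∈ range (2*k+1), (-c)^m * S^(2*k-m) * ((2*k).choose m : ℝ) := by
    rw [sub_eq_add_neg, add_comm S (-c), add_pow]
  rw [h1, h2, ← Finset.sum_add_distrib]
  have hvan := sum_even_vanish k (fun m => c^m * S^(2*k-m) * ((2*k).choose m : ℝ)
      + (-c)^m * S^(2*k-m) * ((2*k).choose m : ℝ)) ?_
  · rw [hvan]
    apply Finset.sum_congr rfl
    intro j hj
    have hjk : j ≤ k := Nat.lt_succ_iff.mp (Finset.mem_range.mp hj)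
    have hne : (-c)^(2*j) = c^(2*j) := Even.neg_pow ⟨j, by ring⟩ c
    have hsub : 2*k - 2*j = 2*(k-j) := by omega
    simp only [hne, hsub]; ring
  · intro m hm
    have : (-c)^m = -(c^m) := Odd.neg_pow hm c
    simp only [this]; ring

lemma rad_moment : ∀ (d : ℕ) (k : ℕ) (b : Fin d → ℝ),
    ∑ ε : Fin d → Bool, (∑ i, (if ε i then (1:ℝ) else -1) * b i) ^ (2*k)
      ≤ 2^d * (khDF k : ℝ) * (∑ i, b i ^ 2) ^ k := by
  intro d
  induction d with
  | zero =>
    intro k b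
    have h1 : (∑ ε : Fin 0 → Bool, (∑ i, (if ε i then (1:ℝ) else -1) * b i) ^ (2*k))
        = (0:ℝ)^(2*k) := by simp
    have h2 : (∑ i : Fin 0, b i ^ 2) = 0 := by simp
    rw [h1, h2, pow_zero, one_mul]
    rcases Nat.eq_zero_or_pos k with hk | hk
    · simp [hk, khDF]
    · rw [zero_pow (by omega), zero_pow (by omega), mul_zero]
  | succ d ih =>
    intro k b
    set c := b 0 with hc
    set SS : (Fin d → Bool) → ℝ := fun ε' => ∑ i : Fin d, (if ε' i then (1:ℝ) else -1) * b i.succ with hSS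
    set σ' : ℝ := ∑ i : Fin d, b i.succ ^ 2 with hσ'
    have hσ'0 : 0 ≤ σ' := Finset.sum_nonneg fun i _ => sq_nonneg _
    have reindex : ∑ ε : Fin (d+1) → Bool, (∑ i, (if ε i then (1:ℝ) else -1) * b i) ^ (2*k)
        = ∑ ε' : Fin d → Bool, ((SS ε' + c)^(2*k) + (SS ε' - c)^(2*k)) := by
      rw [← Equiv.sum_comp (Fin.consEquiv (fun _ : Fin (d+1) => Bool))
        (fun ε => (∑ i, (if ε i then (1:ℝ) else -1) * b i) ^ (2*k)), Fintype.sum_prod_type,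
        Finset.sum_comm]
      apply Finset.sum_congr rfl
      intro ε' _
      rw [Fintype.sum_bool]
      have hb : ∀ y : Bool, (∑ i : Fin (d+1),
          (if (Fin.consEquiv (fun _ : Fin (d+1) => Bool)) (y, ε') i then (1:ℝ) else -1) * b i)
          = (if y then (1:ℝ) else -1) * c + SS ε' := by
        intro y
        rw [Fin.sum_univ_succ]
        simp [Fin.consEquiv_apply, SS, hc]
      rw [hb true, hb false]
      simp only [if_true, Bool.false_eq_true, if_false, one_mul, neg_one_mul]
      ring
    rw [reindex]
    have expand : ∀ ε' : Fin d → Bool, (SS ε' + c)^(2*k) + (SS ε' - c)^(2*k)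
        = ∑ j ∈ range (k+1), 2 * ((2*k).choose (2*j) : ℝ) * (SS ε')^(2*(k-j)) * c^(2*j) :=
      fun ε' => even_expand (SS ε') c k
    calc ∑ ε' : Fin d → Bool, ((SS ε' + c)^(2*k) + (SS ε' - c)^(2*k))
        = ∑ j ∈ range (k+1), ∑ ε' : Fin d → Bool,
            2 * ((2*k).choose (2*j) : ℝ) * (SS ε')^(2*(k-j)) * c^(2*j) := by
          rw [← Finset.sum_comm]
          exact Finset.sum_congr rfl fun ε' _ => expand ε'
      _ = ∑ j ∈ range (k+1), (2 * ((2*k).choose (2*j) : ℝ) * c^(2*j)) *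
            ∑ ε' : Fin d → Bool, (SS ε')^(2*(k-j)) := by
          apply Finset.sum_congr rfl
          intro j _
          rw [Finset.mul_sum]
          exact Finset.sum_congr rfl fun ε' _ => by ring
      _ ≤ ∑ j ∈ range (k+1), (2 * ((2*k).choose (2*j) : ℝ) * c^(2*j)) *
            (2^d * (khDF (k-j) : ℝ) * σ' ^ (k-j)) := by
          apply Finset.sum_le_sum
          intro j _
          apply mul_le_mul_of_nonneg_left (ih (k-j) (fun i => b i.succ))
          have : c^(2*j) = (c^2)^j := by rw [pow_mul]
          rw [this]
          positivity
      _ ≤ ∑ j ∈ range (k+1), (2 * c^(2*j)) *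
            (2^d * ((khDF k : ℝ) * (k.choose j : ℝ)) * σ' ^ (k-j)) := by
          apply Finset.sum_le_sum
          intro j hj
          have hjk : j ≤ k := Nat.lt_succ_iff.mp (Finset.mem_range.mp hj)
          have hch : ((2*k).choose (2*j) * khDF (k-j) : ℝ) ≤ (khDF k * k.choose j : ℝ) := by
            exact_mod_cast Nat.cast_le.mpr (choose_khDF_le hjk)
          have hc2 : (0:ℝ) ≤ c^(2*j) := by rw [pow_mul]; positivity
          have hσk : (0:ℝ) ≤ σ' ^ (k-j) := pow_nonneg hσ'0 _
          calc (2 * ((2*k).choose (2*j) : ℝ) * c^(2*j)) * (2^d * (khDF (k-j) : ℝ) * σ' ^ (k-j))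
              = (((2*k).choose (2*j) : ℝ) * (khDF (k-j) : ℝ)) * (2 * c^(2*j) * 2^d * σ' ^ (k-j)) := by ring
            _ ≤ ((khDF k : ℝ) * (k.choose j : ℝ)) * (2 * c^(2*j) * 2^d * σ' ^ (k-j)) := by
                apply mul_le_mul_of_nonneg_right (by exact_mod_cast hch)
                positivity
            _ = (2 * c^(2*j)) * (2^d * ((khDF k : ℝ) * (k.choose j : ℝ)) * σ' ^ (k-j)) := by ring
      _ = 2^(d+1) * (khDF k : ℝ) * ∑ j ∈ range (k+1), (c^2)^j * σ' ^ (k-j) * (k.choose j : ℝ) := by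
          rw [Finset.mul_sum]
          apply Finset.sum_congr rfl
          intro j _
          rw [pow_mul, pow_succ]
          ring
      _ = 2^(d+1) * (khDF k : ℝ) * (c^2 + σ')^k := by rw [add_pow]
      _ = 2^(d+1) * (khDF k : ℝ) * (∑ i : Fin (d+1), b i ^ 2) ^ k := by
          rw [Fin.sum_univ_succ]

lemma add_pow_le_two_pow_mul (u v : ℝ) (hu : 0 ≤ u) (hv : 0 ≤ v) (k : ℕ) :
    (u + v)^k ≤ 2^k * (u^k + v^k) := by
  rcases le_total u v with h | h
  · calc (u+v)^k ≤ (2*v)^k := by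
          apply pow_le_pow_left₀ (by linarith) (by linarith)
      _ = 2^k * v^k := mul_pow 2 v k
      _ ≤ 2^k * (u^k + v^k) := by
          have : (0:ℝ) ≤ u^k := pow_nonneg hu k
          have h2 : (0:ℝ) ≤ (2:ℝ)^k := by positivity
          nlinarith [pow_nonneg hv k]
  · calc (u+v)^k ≤ (2*u)^k := by
          apply pow_le_pow_left₀ (by linarith) (by linarith)
      _ = 2^k * u^k := mul_pow 2 u k
      _ ≤ 2^k * (u^k + v^k) := by
          have : (0:ℝ) ≤ v^k := pow_nonneg hv k
          have h2 : (0:ℝ) ≤ (2:ℝ)^k := by positivity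
          nlinarith [pow_nonneg hu k]

lemma rad_moment_complex (d k : ℕ) (a : Fin d → ℂ) :
    ∑ ε : Fin d → Bool, ‖∑ i, (if ε i then (1:ℂ) else -1) * a i‖ ^ (2*k)
      ≤ 2^d * (2^(k+1) * (khDF k : ℝ)) * (∑ i, ‖a i‖^2)^k := by
  have hre : ∀ ε : Fin d → Bool, (∑ i, (if ε i then (1:ℂ) else -1) * a i).re
      = ∑ i, (if ε i then (1:ℝ) else -1) * (a i).re := by
    intro ε
    rw [Complex.re_sum]
    apply Finset.sum_congr rfl
    intro i _
    split_ifs <;> simp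
  have him : ∀ ε : Fin d → Bool, (∑ i, (if ε i then (1:ℂ) else -1) * a i).im
      = ∑ i, (if ε i then (1:ℝ) else -1) * (a i).im := by
    intro ε
    rw [Complex.im_sum]
    apply Finset.sum_congr rfl
    intro i _
    split_ifs <;> simp
  have hnorm : ∀ z : ℂ, ‖z‖^(2*k) = (z.re^2 + z.im^2)^k := by
    intro z
    rw [pow_mul]
    congr 1
    rw [Complex.sq_norm, Complex.normSq_apply]
    ring
  have step1 : ∑ ε : Fin d → Bool, ‖∑ i, (if ε i then (1:ℂ) else -1) * a i‖ ^ (2*k)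
      ≤ 2^k * ((∑ ε : Fin d → Bool, (∑ i, (if ε i then (1:ℝ) else -1) * (a i).re)^(2*k))
            + (∑ ε : Fin d → Bool, (∑ i, (if ε i then (1:ℝ) else -1) * (a i).im)^(2*k))) := by
    rw [mul_add, Finset.mul_sum, Finset.mul_sum, ← Finset.sum_add_distrib]
    apply Finset.sum_le_sum
    intro ε _
    rw [hnorm]
    calc ((∑ i, (if ε i then (1:ℂ) else -1) * a i).re^2
            + (∑ i, (if ε i then (1:ℂ) else -1) * a i).im^2)^k
        ≤ 2^k * (((∑ i, (if ε i then (1:ℂ) else -1) * a i).re^2)^k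
            + ((∑ i, (if ε i then (1:ℂ) else -1) * a i).im^2)^k) :=
          add_pow_le_two_pow_mul _ _ (sq_nonneg _) (sq_nonneg _) k
      _ = 2^k * ((∑ i, (if ε i then (1:ℝ) else -1) * (a i).re)^(2*k)
            + (∑ i, (if ε i then (1:ℝ) else -1) * (a i).im)^(2*k)) := by
          rw [hre, him, pow_mul, pow_mul]
      _ = 2^k * (∑ i, (if ε i then (1:ℝ) else -1) * (a i).re)^(2*k)
            + 2^k * (∑ i, (if ε i then (1:ℝ) else -1) * (a i).im)^(2*k) := by ring
  have hsq : ∀ i, (a i).re^2 ≤ ‖a i‖^2 ∧ (a i).im^2 ≤ ‖a i‖^2 := by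
    intro i
    have : ‖a i‖^2 = (a i).re^2 + (a i).im^2 := by
      rw [Complex.sq_norm, Complex.normSq_apply]; ring
    constructor <;> nlinarith [sq_nonneg ((a i).re), sq_nonneg ((a i).im)]
  have hσnn : (0:ℝ) ≤ ∑ i, ‖a i‖^2 := Finset.sum_nonneg fun i _ => sq_nonneg _
  have hrebd : (∑ ε : Fin d → Bool, (∑ i, (if ε i then (1:ℝ) else -1) * (a i).re)^(2*k))
      ≤ 2^d * (khDF k : ℝ) * (∑ i, ‖a i‖^2)^k := by
    refine le_trans (rad_moment d k fun i => (a i).re) ?_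
    apply mul_le_mul_of_nonneg_left _ (by positivity)
    apply pow_le_pow_left₀ (Finset.sum_nonneg fun i _ => sq_nonneg _)
    exact Finset.sum_le_sum fun i _ => (hsq i).1
  have himbd : (∑ ε : Fin d → Bool, (∑ i, (if ε i then (1:ℝ) else -1) * (a i).im)^(2*k))
      ≤ 2^d * (khDF k : ℝ) * (∑ i, ‖a i‖^2)^k := by
    refine le_trans (rad_moment d k fun i => (a i).im) ?_
    apply mul_le_mul_of_nonneg_left _ (by positivity)
    apply pow_le_pow_left₀ (Finset.sum_nonneg fun i _ => sq_nonneg _)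
    exact Finset.sum_le_sum fun i _ => (hsq i).2
  calc ∑ ε : Fin d → Bool, ‖∑ i, (if ε i then (1:ℂ) else -1) * a i‖ ^ (2*k)
      ≤ 2^k * ((∑ ε : Fin d → Bool, (∑ i, (if ε i then (1:ℝ) else -1) * (a i).re)^(2*k))
            + (∑ ε : Fin d → Bool, (∑ i, (if ε i then (1:ℝ) else -1) * (a i).im)^(2*k))) := step1
    _ ≤ 2^k * ((2^d * (khDF k : ℝ) * (∑ i, ‖a i‖^2)^k) + (2^d * (khDF k : ℝ) * (∑ i, ‖a i‖^2)^k)) := by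
        apply mul_le_mul_of_nonneg_left (add_le_add hrebd himbd) (by positivity)
    _ = 2^d * (2^(k+1) * (khDF k : ℝ)) * (∑ i, ‖a i‖^2)^k := by rw [pow_succ]; ring

lemma pointwise_khintchine (p : ℝ) (hp : 1 ≤ p) (k : ℕ) (hk : 1 ≤ k) (hpk : p ≤ 2*k)
    (M : ℝ) (hM : 0 < M) (hMk : 2^(k+1) * (khDF k : ℝ) ≤ M^(2*k))
    (d : ℕ) (a : Fin d → ℂ) :
    ∑ ε : Fin d → Bool, ‖∑ i, (if ε i then (1:ℂ) else -1) * a i‖ ^ p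
      ≤ 2^d * (M ^ p * (∑ i, ‖a i‖^2) ^ (p/2)) := by
  have hp0 : 0 < p := lt_of_lt_of_le one_pos hp
  set σ2 : ℝ := ∑ i, ‖a i‖^2 with hσ2
  have hσ2nn : 0 ≤ σ2 := Finset.sum_nonneg fun i _ => sq_nonneg _
  set u : (Fin d → Bool) → ℝ := fun ε => ‖∑ i, (if ε i then (1:ℂ) else -1) * a i‖ with hu
  have hunn : ∀ ε, 0 ≤ u ε := fun ε => norm_nonneg _
  have moment : ∑ ε : Fin d → Bool, u ε ^ (2*k) ≤ 2^d * M^(2*k) * σ2^k := by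
    refine le_trans (rad_moment_complex d k a) ?_
    have h1 : (0:ℝ) ≤ σ2^k := pow_nonneg hσ2nn k
    have h2 := mul_le_mul_of_nonneg_right hMk h1
    have h3 : (0:ℝ) ≤ (2:ℝ)^d := by positivity
    calc (2:ℝ)^d * (2^(k+1) * (khDF k : ℝ)) * σ2^k
        = 2^d * ((2^(k+1) * (khDF k : ℝ)) * σ2^k) := by ring
      _ ≤ 2^d * (M^(2*k) * σ2^k) := mul_le_mul_of_nonneg_left h2 h3
      _ = 2^d * M^(2*k) * σ2^k := by ring
  -- Jensen
  set r : ℝ := (2*k : ℝ)/p with hr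
  have hr1 : 1 ≤ r := by
    rw [hr, le_div_iff₀ hp0, one_mul]
    exact_mod_cast hpk
  have hr0 : r ≠ 0 := by positivity
  have hcard : (Fintype.card (Fin d → Bool) : ℝ) = 2^d := by
    simp [Fintype.card_fun]
  have hw' : ∑ _ε : Fin d → Bool, ((2:ℝ)^d)⁻¹ = 1 := by
    rw [Finset.sum_const, Finset.card_univ, nsmul_eq_mul, hcard, mul_inv_cancel₀ (by positivity)]
  have jensen := Real.arith_mean_le_rpow_mean (s := Finset.univ)
    (fun _ε : Fin d → Bool => ((2:ℝ)^d)⁻¹) (fun ε => u ε ^ p)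
    (fun _ _ => by positivity) hw' (fun ε _ => Real.rpow_nonneg (hunn ε) p) hr1
  have hzr : ∀ ε : Fin d → Bool, (u ε ^ p) ^ r = u ε ^ (2*k) := by
    intro ε
    rw [← Real.rpow_mul (hunn ε)]
    have : p * r = (2*k : ℕ) := by
      rw [hr]; push_cast; field_simp
    rw [this, Real.rpow_natCast]
  simp only [hzr] at jensen
  rw [← Finset.mul_sum, ← Finset.mul_sum] at jensen
  have hinner : ((2:ℝ)^d)⁻¹ * ∑ ε : Fin d → Bool, u ε ^ (2*k) ≤ M^(2*k) * σ2^k := by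
    rw [inv_mul_le_iff₀ (by positivity)]
    calc ∑ ε : Fin d → Bool, u ε ^ (2*k) ≤ 2^d * M^(2*k) * σ2^k := moment
      _ = 2^d * (M^(2*k) * σ2^k) := by ring
  have houter : (((2:ℝ)^d)⁻¹ * ∑ ε : Fin d → Bool, u ε ^ (2*k)) ^ (1/r)
      ≤ (M^(2*k) * σ2^k) ^ (1/r) := by
    apply Real.rpow_le_rpow _ hinner (by positivity)
    have : (0:ℝ) ≤ ∑ ε : Fin d → Bool, u ε ^ (2*k) :=
      Finset.sum_nonneg fun ε _ => by
        rw [pow_mul]; positivity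
    positivity
  have hfinal : (M^(2*k) * σ2^k : ℝ) ^ (1/r) = M^p * σ2^(p/2) := by
    rw [Real.mul_rpow (by positivity) (pow_nonneg hσ2nn k)]
    congr 1
    · rw [← Real.rpow_natCast M (2*k), ← Real.rpow_mul hM.le]
      congr 1
      rw [hr]; push_cast; field_simp
    · rw [← Real.rpow_natCast σ2 k, ← Real.rpow_mul hσ2nn]
      congr 1
      rw [hr]; push_cast; field_simp
  rw [hfinal] at houter
  have := le_trans jensen houter
  rw [inv_mul_le_iff₀ (by positivity)] at this
  calc ∑ ε : Fin d → Bool, u ε ^ p ≤ 2^d * (M^p * σ2^(p/2)) := this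

lemma khDF_le_pow (k : ℕ) : khDF k ≤ (2*k)^k := by
  induction k with
  | zero => simp [khDF]
  | succ k ih =>
    calc khDF (k+1) = (2*k+1) * khDF k := rfl
      _ ≤ (2*(k+1)) * (2*k)^k := Nat.mul_le_mul (by omega) ih
      _ ≤ (2*(k+1)) * (2*(k+1))^k :=
          Nat.mul_le_mul_left _ (Nat.pow_le_pow_left (by omega) k)
      _ = (2*(k+1))^(k+1) := (pow_succ' _ _).symm


/-- The instance `E = L_p` (an exact interpolation space for `(L_1, L_q)`
when `1 ≤ p ≤ q`) of the paper's Corollary 2.4, with the second algebra commutative: a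
Rademacher Khintchine inequality in `L_p` with constant `4 √q · 2^{1/p}`. -/
theorem scalar_rademacher_Lp_khintchine {S : Type*} [MeasurableSpace S]
    (μ : Measure S) [SigmaFinite μ]
    (p q : ℝ) (hp : 1 ≤ p) (hpq : p ≤ q)
    {d : ℕ} (x : Fin d → S → ℂ) (hx : ∀ i, Measurable (x i)) :
    ((∑ ε : Fin d → Bool,
        ∫⁻ s, ENNReal.ofReal (‖∑ i, (if ε i then (1 : ℂ) else -1) * x i s‖ ^ p) ∂μ) / 2 ^ d)
        ^ (1 / p)
      ≤ ENNReal.ofReal (4 * Real.sqrt q * 2 ^ (1 / p)) *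
          (∫⁻ s, ENNReal.ofReal ((∑ i, ‖x i s‖ ^ 2) ^ (p / 2)) ∂μ) ^ (1 / p) := by
  have hq1 : (1:ℝ) ≤ q := le_trans hp hpq
  have hq0 : (0:ℝ) < q := lt_of_lt_of_le one_pos hq1
  have hp0 : (0:ℝ) < p := lt_of_lt_of_le one_pos hp
  set k : ℕ := ⌈q/2⌉₊ with hkdef
  have hk1 : 1 ≤ k := Nat.one_le_iff_ne_zero.mpr (by
    simp only [hkdef, ne_eq, Nat.ceil_eq_zero, not_le]
    positivity)
  have hkq : (k:ℝ) < q/2 + 1 := Nat.ceil_lt_add_one (by positivity)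
  have hqk : q/2 ≤ (k:ℝ) := Nat.le_ceil _
  have hpk : p ≤ 2*(k:ℝ) := by linarith
  set M : ℝ := 4 * Real.sqrt q with hMdef
  have hM : 0 < M := by
    have := Real.sqrt_pos.mpr hq0
    positivity
  have hM2 : M^2 = 16 * q := by
    rw [hMdef, mul_pow, Real.sq_sqrt hq0.le]; norm_num
  have hMk : 2^(k+1) * (khDF k : ℝ) ≤ M^(2*k) := by
    have h4 : (2:ℝ)^(k+1) ≤ 4^k := by
      have h2 : (2:ℝ) ≤ 2^k := by
        calc (2:ℝ) = 2^1 := (pow_one 2).symm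
          _ ≤ 2^k := pow_le_pow_right₀ (by norm_num) hk1
      calc (2:ℝ)^(k+1) = 2 * 2^k := by rw [pow_succ]; ring
        _ ≤ 2^k * 2^k := mul_le_mul_of_nonneg_right h2 (by positivity)
        _ = 4^k := by rw [← mul_pow]; norm_num
    have hdf : (khDF k : ℝ) ≤ (2*(k:ℝ))^k := by
      have := khDF_le_pow k
      calc (khDF k : ℝ) ≤ ((2*k : ℕ)^k : ℕ) := by exact_mod_cast this
        _ = (2*(k:ℝ))^k := by push_cast; ring
    calc (2:ℝ)^(k+1) * (khDF k : ℝ) ≤ 4^k * (2*(k:ℝ))^k := by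
          apply mul_le_mul h4 hdf (by positivity) (by positivity)
      _ = (8*(k:ℝ))^k := by rw [← mul_pow]; ring_nf
      _ ≤ (16*q)^k := by
          apply pow_le_pow_left₀ (by positivity)
          linarith
      _ = (M^2)^k := by rw [hM2]
      _ = M^(2*k) := by rw [← pow_mul]
  -- pointwise bound
  have hptw : ∀ s : S, ∑ ε : Fin d → Bool, ‖∑ i, (if ε i then (1:ℂ) else -1) * x i s‖ ^ p
      ≤ 2^d * (M ^ p * (∑ i, ‖x i s‖^2) ^ (p/2)) := fun s =>
    pointwise_khintchine p hp k hk1 hpk M hM hMk d (fun i => x i s)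
  -- measurability
  have hmeas : ∀ ε : Fin d → Bool, Measurable fun s =>
      ENNReal.ofReal (‖∑ i, (if ε i then (1:ℂ) else -1) * x i s‖ ^ p) := by
    intro ε
    apply Measurable.ennreal_ofReal
    have h1 : Measurable fun s => ∑ i, (if ε i then (1:ℂ) else -1) * x i s :=
      Finset.measurable_sum _ (fun i _ => measurable_const.mul (hx i))
    exact (Real.continuous_rpow_const hp0.le).measurable.comp h1.norm
  set G : ENNReal := ∫⁻ s, ENNReal.ofReal ((∑ i, ‖x i s‖ ^ 2) ^ (p / 2)) ∂μ with hG
  set T : ENNReal := ∑ ε : Fin d → Bool,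
      ∫⁻ s, ENNReal.ofReal (‖∑ i, (if ε i then (1:ℂ) else -1) * x i s‖ ^ p) ∂μ with hT
  have key : T ≤ 2^d * (ENNReal.ofReal (M^p) * G) := by
    rw [hT, ← lintegral_finset_sum _ (fun ε _ => hmeas ε)]
    have hpt : ∀ s, (∑ ε : Fin d → Bool,
        ENNReal.ofReal (‖∑ i, (if ε i then (1:ℂ) else -1) * x i s‖ ^ p))
        ≤ ENNReal.ofReal ((2:ℝ)^d * (M^p * (∑ i, ‖x i s‖^2) ^ (p/2))) := by
      intro s
      rw [← ENNReal.ofReal_sum_of_nonneg (fun ε _ => Real.rpow_nonneg (norm_nonneg _) p)]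
      exact ENNReal.ofReal_le_ofReal (hptw s)
    calc ∫⁻ s, ∑ ε : Fin d → Bool,
            ENNReal.ofReal (‖∑ i, (if ε i then (1:ℂ) else -1) * x i s‖ ^ p) ∂μ
        ≤ ∫⁻ s, ENNReal.ofReal ((2:ℝ)^d * (M^p * (∑ i, ‖x i s‖^2) ^ (p/2))) ∂μ :=
          lintegral_mono hpt
      _ = ∫⁻ s, (ENNReal.ofReal ((2:ℝ)^d) * ENNReal.ofReal (M^p))
            * ENNReal.ofReal ((∑ i, ‖x i s‖^2) ^ (p/2)) ∂μ := by
          congr 1; funext s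
          rw [ENNReal.ofReal_mul (by positivity), ENNReal.ofReal_mul (by positivity :
            (0:ℝ) ≤ M^p), mul_assoc]
      _ = (ENNReal.ofReal ((2:ℝ)^d) * ENNReal.ofReal (M^p)) * G :=
          lintegral_const_mul' _ _ (by finiteness)
      _ = 2^d * (ENNReal.ofReal (M^p) * G) := by
          rw [ENNReal.ofReal_pow (by norm_num), ENNReal.ofReal_ofNat, mul_assoc]
  have hdiv : T / 2^d ≤ ENNReal.ofReal (M^p) * G := by
    rw [ENNReal.div_le_iff_le_mul (Or.inl (by positivity)) (Or.inl (ENNReal.pow_ne_top ENNReal.ofNat_ne_top))]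
    calc T ≤ 2^d * (ENNReal.ofReal (M^p) * G) := key
      _ = ENNReal.ofReal (M^p) * G * 2^d := by ring
  calc (T / 2^d) ^ (1/p) ≤ (ENNReal.ofReal (M^p) * G) ^ (1/p) :=
        ENNReal.rpow_le_rpow hdiv (by positivity)
    _ = ENNReal.ofReal (M^p) ^ (1/p) * G ^ (1/p) :=
        ENNReal.mul_rpow_of_nonneg _ _ (by positivity)
    _ = ENNReal.ofReal M * G ^ (1/p) := by
        congr 1
        rw [ENNReal.ofReal_rpow_of_pos (by positivity), ← Real.rpow_mul hM.le,
          mul_one_div, div_self hp0.ne', Real.rpow_one]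
    _ ≤ ENNReal.ofReal (4 * Real.sqrt q * 2 ^ (1 / p)) * G ^ (1/p) := by
        apply mul_le_mul_left
        apply ENNReal.ofReal_le_ofReal
        have h1 : (1:ℝ) ≤ 2 ^ (1/p) := by
          calc (1:ℝ) = 2 ^ (0:ℝ) := (Real.rpow_zero 2).symm
            _ ≤ 2 ^ (1/p) := Real.rpow_le_rpow_of_exponent_le (by norm_num) (by positivity)
        calc M = M * 1 := (mul_one M).symm
          _ ≤ M * 2 ^ (1/p) := mul_le_mul_of_nonneg_left h1 hM.le
          _ = 4 * Real.sqrt q * 2 ^ (1/p) := by rw [hMdef]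
end

section
/- Let (Ω,ν) be a probability space, let (S,μ) be a σ-finite measure space, let c_1,…,c_d : Ω → ℂ satisfy the scalar upper L_∞-Khintchine inequality with constant C > 0, and let Φ : [0,∞) → [0,∞) be increasing. For a measurable function h ≥ 0 on a measure space, let μ_u(h) = inf{t ≥ 0 : (measure of {h > t}) ≤ u} denote its decreasing rearrangement. Then for all measurable x_1,…,x_d : S → ℂ with μ{(Σ_i |x_i|²)^{1/2} > t} < ∞ for every t > 0, one has sup_{u>0} Φ(μ_u(Σ_{i=1}^d c_i(ω) x_i(s))) ≤ sup_{u>0} Φ(C · μ_u((Σ_{i=1}^d |x_i|²)^{1/2})), where the rearrangement on the left is computed with respect to the product measure ν × μ and the one on the right with respect to μ. -/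
open MeasureTheory

/-- Bounded measurable functions `c 1, …, c d : Ω → ℂ` on a probability space satisfy the
scalar upper `L∞`-Khintchine inequality with constant `C` if for every `a ∈ ℂ^d` one has
`esssup_ω |∑ i, a i * c i ω| ≤ C (∑ i |a i|²)^{1/2}` (stated in the equivalent a.e. form). -/
def ScalarUpperKhintchine {Ω : Type*} [MeasurableSpace Ω] (ν : Measure Ω) {d : ℕ}
    (c : Fin d → Ω → ℂ) (C : ℝ) : Prop :=
  ∀ a : Fin d → ℂ, ∀ᵐ ω ∂ν, ‖∑ i, a i * c i ω‖ ≤ C * Real.sqrt (∑ i, ‖a i‖ ^ 2)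
open scoped ENNReal

/-- The decreasing rearrangement `μ_u(g) = inf {t ≥ 0 : m {g > t} ≤ u}` of a nonnegative
function `g`, with the convention `inf ∅ = ∞` (the infimum is taken in `ℝ≥0∞`). -/
noncomputable def decreasingRearrangement {α : Type*} [MeasurableSpace α]
    (m : Measure α) (g : α → ℝ) (u : ℝ) : ℝ≥0∞ :=
  sInf (ENNReal.ofReal '' {t : ℝ | 0 ≤ t ∧ m {x | t < g x} ≤ ENNReal.ofReal u})

/-- The monotone extension of an increasing function `Φ : [0,∞) → [0,∞)` to `ℝ≥0∞`. -/
noncomputable def orliczExtend (Φ : ℝ → ℝ) (x : ℝ≥0∞) : ℝ≥0∞ :=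
  if x = ∞ then ∞ else ENNReal.ofReal (Φ x.toReal)

private lemma dr_mono_aux {α β : Type*} [MeasurableSpace α] [MeasurableSpace β]
    {m : Measure α} {m' : Measure β} {f : α → ℝ} {g : β → ℝ}
    (h : ∀ t : ℝ, 0 ≤ t → m {x | t < f x} ≤ m' {x | t < g x}) (u : ℝ) :
    decreasingRearrangement m f u ≤ decreasingRearrangement m' g u := by
  apply sInf_le_sInf
  rintro _ ⟨t, ⟨ht0, ht⟩, rfl⟩
  exact ⟨t, ⟨ht0, le_trans (h t ht0) ht⟩, rfl⟩

private lemma dr_scale_aux {α : Type*} [MeasurableSpace α] {m : Measure α} {g : α → ℝ}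
    {C : ℝ} (hC : 0 < C) (u : ℝ) :
    decreasingRearrangement m (fun a => C * g a) u
      ≤ ENNReal.ofReal C * decreasingRearrangement m g u := by
  conv_rhs => rw [decreasingRearrangement, sInf_eq_iInf']
  rw [ENNReal.mul_iInf_of_ne (by simp [hC]) ENNReal.ofReal_ne_top]
  refine le_iInf fun ⟨_, ⟨t, ⟨ht0, ht⟩, rfl⟩⟩ => ?_
  refine sInf_le ⟨C * t, ⟨⟨mul_nonneg hC.le ht0, ?_⟩, ?_⟩⟩
  · have : {x | C * t < C * g x} = {x | t < g x} := by
      ext a; simp [mul_lt_mul_iff_right₀ hC]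
    rw [this]; exact ht
  · simp [ENNReal.ofReal_mul hC.le]

private lemma orliczExtend_mono_aux {Φ : ℝ → ℝ} (hΦ : MonotoneOn Φ (Set.Ici 0)) :
    Monotone (orliczExtend Φ) := by
  intro a b hab
  unfold orliczExtend
  by_cases hb : b = ∞
  · simp [hb]
  · have ha : a ≠ ∞ := fun ha => hb (top_le_iff.1 (ha ▸ hab))
    rw [if_neg hb, if_neg ha]
    exact ENNReal.ofReal_le_ofReal
      (hΦ ENNReal.toReal_nonneg ENNReal.toReal_nonneg (ENNReal.toReal_mono hb hab))

/-- The commutative instance of the weak Φ-moment version of the paper's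
Lemma 3.1, asserted in the final Remark of the paper: a weak Φ-moment estimate
`sup_{u>0} Φ(μ_u(∑ c_i x_i)) ≤ sup_{u>0} Φ(C μ_u((∑ |x_i|²)^{1/2}))`. -/
theorem scalar_khintchine_weak_orlicz_moment {Ω S : Type*}
    [MeasurableSpace Ω] [MeasurableSpace S]
    (ν : Measure Ω) [IsProbabilityMeasure ν] (μ : Measure S) [SigmaFinite μ]
    {d : ℕ} (c : Fin d → Ω → ℂ) (hcm : ∀ i, Measurable (c i))
    (hcb : ∀ i, ∃ M : ℝ, ∀ ω, ‖c i ω‖ ≤ M)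
    (C : ℝ) (hC : 0 < C) (hKh : ScalarUpperKhintchine ν c C)
    (Φ : ℝ → ℝ) (hΦmono : MonotoneOn Φ (Set.Ici 0)) (hΦnonneg : ∀ t ≥ (0 : ℝ), 0 ≤ Φ t)
    (x : Fin d → S → ℂ) (hx : ∀ i, Measurable (x i))
    (hfin : ∀ t > (0 : ℝ), μ {s | t < Real.sqrt (∑ i, ‖x i s‖ ^ 2)} < ∞) :
    ⨆ u ∈ Set.Ioi (0 : ℝ),
        orliczExtend Φ
          (decreasingRearrangement (ν.prod μ)
            (fun q : Ω × S => ‖∑ i, c i q.1 * x i q.2‖) u)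
      ≤ ⨆ u ∈ Set.Ioi (0 : ℝ),
          orliczExtend Φ
            (ENNReal.ofReal C *
              decreasingRearrangement μ (fun s => Real.sqrt (∑ i, ‖x i s‖ ^ 2)) u) := by

  set g0 : S → ℝ := fun s => Real.sqrt (∑ i, ‖x i s‖ ^ 2) with hg0
  -- a.e. pointwise Khintchine bound on the product space
  have hae : ∀ᵐ q ∂(ν.prod μ), ‖∑ i, c i q.1 * x i q.2‖ ≤ C * g0 q.2 := by
    have hf : Measurable fun q : Ω × S => ‖∑ i, c i q.1 * x i q.2‖ :=
      (Finset.measurable_sum _ fun i _ =>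
        ((hcm i).comp measurable_fst).mul ((hx i).comp measurable_snd)).norm
    have hg : Measurable fun q : Ω × S => C * g0 q.2 :=
      (measurable_const.mul ((Finset.measurable_sum _ fun i _ =>
        ((hx i).comp measurable_snd).norm.pow measurable_const).sqrt))
    have hN : MeasurableSet {q : Ω × S | C * g0 q.2 < ‖∑ i, c i q.1 * x i q.2‖} :=
      measurableSet_lt hg hf
    rw [Filter.eventually_iff, mem_ae_iff,
      show ({q : Ω × S | ‖∑ i, c i q.1 * x i q.2‖ ≤ C * g0 q.2}ᶜ)
        = {q : Ω × S | C * g0 q.2 < ‖∑ i, c i q.1 * x i q.2‖}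
      from by ext q; simp [not_le],
      Measure.prod_apply_symm hN]
    have hzero : ∀ s : S, ν ((fun ω => (ω, s)) ⁻¹' {q : Ω × S |
        C * g0 q.2 < ‖∑ i, c i q.1 * x i q.2‖}) = 0 := by
      intro s
      have := hKh (fun i => x i s)
      rw [Filter.eventually_iff, mem_ae_iff] at this
      rw [show ((fun ω => (ω, s)) ⁻¹' {q : Ω × S |
          C * g0 q.2 < ‖∑ i, c i q.1 * x i q.2‖})
        = {ω : Ω | ‖∑ i, (fun i => x i s) i * c i ω‖
            ≤ C * Real.sqrt (∑ i, ‖(fun i => x i s) i‖ ^ 2)}ᶜ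
        from by ext ω; simp [hg0, not_le, mul_comm]]
      exact this
    rw [lintegral_congr hzero, lintegral_zero]
  -- superlevel-set comparison
  have hlevel : ∀ t : ℝ, 0 ≤ t →
      (ν.prod μ) {q : Ω × S | t < ‖∑ i, c i q.1 * x i q.2‖}
        ≤ μ {s | t < C * g0 s} := by
    intro t _
    have h1 : (ν.prod μ) {q : Ω × S | t < ‖∑ i, c i q.1 * x i q.2‖}
        ≤ (ν.prod μ) {q : Ω × S | t < C * g0 q.2} := by
      apply measure_mono_ae
      filter_upwards [hae] with q hq hq'
      exact lt_of_lt_of_le hq' hq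
    have h2 : {q : Ω × S | t < C * g0 q.2} = Set.univ ×ˢ {s | t < C * g0 s} := by
      ext q; simp
    rw [h2, Measure.prod_prod, measure_univ, one_mul] at h1
    exact h1
  -- pointwise bound on rearrangements
  have hkey : ∀ u : ℝ,
      decreasingRearrangement (ν.prod μ)
        (fun q : Ω × S => ‖∑ i, c i q.1 * x i q.2‖) u
      ≤ ENNReal.ofReal C * decreasingRearrangement μ g0 u := fun u =>
    le_trans (dr_mono_aux hlevel u) (dr_scale_aux hC u)
  exact iSup₂_mono fun u _ => orliczExtend_mono_aux hΦmono (hkey u)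
end
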